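/- Let U be a D×d matrix with orthonormal columns, let r ∈ R^D satisfy U^T r = 0, let w ∈ R^d be nonzero with r nonzero, and let σ, η ∈ R. Then the updated matrix U_new = U + ((cos(ση) - 1)/‖w‖²) U w w^T + sin(ση) (r/‖r‖)(w^T/‖w‖) also has orthonormal columns: U_new^T U_new = I_d. -/

import Mathlib

/-!
Write the update as `U + p wᵀ` with `p = c • U w + s • r`, where `c = (cos θ - 1) / ‖w‖²` and
`s = sin θ / (‖r‖ ‖w‖)`. Since `Uᵀ p = c • w`, the Gram matrix of the update is
`1 + (2 c + ‖p‖²) • w wᵀ`, and `‖p‖² = c² ‖w‖² + s² ‖r‖²` because `U w ⟂ r`. The coefficient is then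
`(2 cos θ - 2 + (cos θ - 1)² + sin² θ) / ‖w‖² = 0`.
-/

open Matrix

section RankOne

variable {m n R : Type*} [Fintype m] [CommRing R]

theorem transpose_add_vecMulVec_mul_self (U : Matrix m n R) (p : m → R) (w : n → R) :
    (U + vecMulVec p w)ᵀ * (U + vecMulVec p w) =
      Uᵀ * U + vecMulVec w (Uᵀ *ᵥ p) + vecMulVec (Uᵀ *ᵥ p) w + (p ⬝ᵥ p) • vecMulVec w w := by
  rw [transpose_add, transpose_vecMulVec, Matrix.add_mul, Matrix.mul_add, Matrix.mul_add,
    vecMulVec_mul_vecMulVec, vecMulVec_smul, mul_vecMulVec, vecMulVec_mul, ← mulVec_transpose]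
  abel

theorem transpose_mul_self_add_vecMulVec_eq_one [DecidableEq n] {U : Matrix m n R}
    (hU : Uᵀ * U = 1) {p : m → R} {w : n → R} {a : R} (hp : Uᵀ *ᵥ p = a • w)
    (ha : 2 * a + p ⬝ᵥ p = 0) :
    (U + vecMulVec p w)ᵀ * (U + vecMulVec p w) = 1 := by
  have hcoeff : a + (a + p ⬝ᵥ p) = 0 := by linear_combination ha
  rw [transpose_add_vecMulVec_mul_self, hU, hp, vecMulVec_smul, smul_vecMulVec, add_assoc,
    add_assoc, ← add_smul, ← add_smul, hcoeff, zero_smul, add_zero]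

theorem dotProduct_mulVec_self_of_transpose_mul_self_eq_one [Fintype n] [DecidableEq n]
    {U : Matrix m n R} (hU : Uᵀ * U = 1) (v : n → R) : (U *ᵥ v) ⬝ᵥ (U *ᵥ v) = v ⬝ᵥ v := by
  rw [dotProduct_mulVec, ← mulVec_transpose, mulVec_mulVec, hU, one_mulVec]

end RankOne

open Real in
theorem geodesic_coeff_eq_zero (θ W R : ℝ) (hW : 0 < W) (hR : 0 < R) :
    2 * ((cos θ - 1) / W) + (((cos θ - 1) / W) ^ 2 * W + (sin θ / (√R * √W)) ^ 2 * R) = 0 := by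
  rw [div_pow, div_pow, mul_pow, sq_sqrt hR.le, sq_sqrt hW.le]
  field_simp
  linear_combination sin_sq_add_cos_sq θ

theorem stmt_3 (D d : ℕ) (U : Matrix (Fin D) (Fin d) ℝ) (hU : Uᵀ * U = 1)
    (r : Fin D → ℝ) (hr : Uᵀ *ᵥ r = 0) (hr0 : r ≠ 0)
    (w : Fin d → ℝ) (hw0 : w ≠ 0) (σ η : ℝ)
    (Unew : Matrix (Fin D) (Fin d) ℝ)
    (hUnew : Unew = U + ((Real.cos (σ * η) - 1) / (w ⬝ᵥ w)) • vecMulVec (U *ᵥ w) w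
      + (Real.sin (σ * η) / (Real.sqrt (r ⬝ᵥ r) * Real.sqrt (w ⬝ᵥ w))) • vecMulVec r w) :
    Unewᵀ * Unew = 1 := by
  set c := (Real.cos (σ * η) - 1) / (w ⬝ᵥ w)
  set s := Real.sin (σ * η) / (Real.sqrt (r ⬝ᵥ r) * Real.sqrt (w ⬝ᵥ w))
  have hUnew' : Unew = U + vecMulVec (c • (U *ᵥ w) + s • r) w := by
    rw [hUnew, add_vecMulVec, smul_vecMulVec, smul_vecMulVec, add_assoc]
  have hp : Uᵀ *ᵥ (c • (U *ᵥ w) + s • r) = c • w := by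
    rw [mulVec_add, mulVec_smul, mulVec_smul, mulVec_mulVec, hU, one_mulVec, hr, smul_zero,
      add_zero]
  have hUwr : (U *ᵥ w) ⬝ᵥ r = 0 := by
    rw [dotProduct_comm, dotProduct_mulVec, ← mulVec_transpose, hr, zero_dotProduct]
  have hpp : (c • (U *ᵥ w) + s • r) ⬝ᵥ (c • (U *ᵥ w) + s • r) =
      c ^ 2 * (w ⬝ᵥ w) + s ^ 2 * (r ⬝ᵥ r) := by
    simp only [add_dotProduct, dotProduct_add, smul_dotProduct, dotProduct_smul, smul_eq_mul,
      dotProduct_mulVec_self_of_transpose_mul_self_eq_one hU, hUwr, dotProduct_comm r]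
    ring
  rw [hUnew']
  refine transpose_mul_self_add_vecMulVec_eq_one hU hp ?_
  rw [hpp]
  exact geodesic_coeff_eq_zero _ _ _ (by simpa using dotProduct_self_star_pos_iff.mpr hw0)
    (by simpa using dotProduct_self_star_pos_iff.mpr hr0)
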